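/- (Energy a posteriori error estimate for the primal problem.) Under the primal error setting with coercivity constants α_A ≥ α_{A,LB} > 0 and α_G ≥ α_{G,LB} > 0, one has the parameter-independent space-time energy bound ∑_{m=1}^{N} [ (eᵐ)ᵀ M eᵐ + Δt·(eᵐ)ᵀ S eᵐ ] = ∑_{m=1}^{N} ‖eᵐ‖²_{G*} ≤ ((T + Δt)/(α_{G,LB}·α_{A,LB}))·∑_{m=1}^{N} ‖rᵐ‖₋₁², where T = N·Δt. -/

import Mathlib

open Matrix BigOperators Finset

/-- The energy norm `‖v‖_{G*} = √(vᵀ G* v)` induced by a matrix `G`. -/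
noncomputable def normG {d : ℕ} (G : Matrix (Fin d) (Fin d) ℝ) (v : Fin d → ℝ) : ℝ :=
  Real.sqrt (v ⬝ᵥ G.mulVec v)

/-- The dual norm `‖r‖₋₁ = sup_{v ≠ 0} (rᵀ v)/‖v‖_{G*}`. -/
noncomputable def dualNorm {d : ℕ} (G : Matrix (Fin d) (Fin d) ℝ) (r : Fin d → ℝ) : ℝ :=
  ⨆ v : {v : Fin d → ℝ // v ≠ 0}, (r ⬝ᵥ (v : Fin d → ℝ)) / normG G (v : Fin d → ℝ)

/-- The symmetric part `(A + Aᵀ)/2` of a matrix. -/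
noncomputable def symPart {d : ℕ} (A : Matrix (Fin d) (Fin d) ℝ) : Matrix (Fin d) (Fin d) ℝ :=
  ((1 : ℝ)/2) • (A + Aᵀ)

/-!
Test the `n`-th step with `eⁿ`. Since `2 (eⁿ)ᵀ M eⁿ⁻¹ ≤ |eⁿ|²_M + |eⁿ⁻¹|²_M` and Young's inequality
absorbs the residual `-Δt (rⁿ)ᵀ eⁿ ≤ Δt ‖rⁿ‖₋₁ ‖eⁿ‖_{G*}` into the `α_A`-coercive term, one gets
`α_A (|eⁿ|²_M - |eⁿ⁻¹|²_M + Δt (eⁿ)ᵀ A eⁿ) ≤ Δt ‖rⁿ‖₋₁²`. Telescoping from `e⁰ = 0` bounds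
`α_A (|eⁿ|²_M + Δt ∑_{k ≤ n} (eᵏ)ᵀ A eᵏ)` by `R = Δt ∑_k ‖rᵏ‖₋₁²` for every `n ≤ N`; summing the mass
terms over `n` costs `N R`, the `A`-terms once more `R`, and the `α_G`-coercivity of `M + Δt A_sym`
turns `∑ (|eᵐ|²_M + Δt (eᵐ)ᵀ A eᵐ)` into `α_G ∑ ‖eᵐ‖²_{G*}`, giving the factor `(N + 1) Δt = T + Δt`.
-/

theorem Matrix.IsSymm.dotProduct_mulVec_comm {n : Type*} [Fintype n] {A : Matrix n n ℝ}
    (hA : A.IsSymm) (x y : n → ℝ) : x ⬝ᵥ A *ᵥ y = y ⬝ᵥ A *ᵥ x := by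
  rw [dotProduct_mulVec, ← mulVec_transpose, hA.eq, dotProduct_comm]

theorem Matrix.PosSemidef.two_mul_dotProduct_mulVec_le {n : Type*} [Fintype n]
    {M : Matrix n n ℝ} (hM : M.PosSemidef) (x y : n → ℝ) :
    2 * (x ⬝ᵥ M *ᵥ y) ≤ x ⬝ᵥ M *ᵥ x + y ⬝ᵥ M *ᵥ y := by
  have h := hM.dotProduct_mulVec_nonneg (x - y)
  have hsymm := (isHermitian_iff_isSymm.mp hM.isHermitian).dotProduct_mulVec_comm y x
  simp only [star_trivial, mulVec_sub, dotProduct_sub, sub_dotProduct, hsymm] at h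
  linarith

theorem Matrix.PosSemidef.dotProduct_mulVec_sq_le {n : Type*} [Fintype n] {G : Matrix n n ℝ}
    (hG : G.PosSemidef) (x y : n → ℝ) :
    (x ⬝ᵥ G *ᵥ y) ^ 2 ≤ (x ⬝ᵥ G *ᵥ x) * (y ⬝ᵥ G *ᵥ y) := by
  let := G.toSeminormedAddCommGroup hG
  let := G.toInnerProductSpace hG
  have h : (G *ᵥ y) ⬝ᵥ x * ((G *ᵥ y) ⬝ᵥ x) ≤ ((G *ᵥ x) ⬝ᵥ x) * ((G *ᵥ y) ⬝ᵥ y) :=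
    real_inner_mul_inner_self_le x y
  rw [sq]
  simpa only [dotProduct_comm _ x, dotProduct_comm _ y] using h

theorem dotProduct_symPart_mulVec {d : ℕ} (A : Matrix (Fin d) (Fin d) ℝ) (v : Fin d → ℝ) :
    v ⬝ᵥ symPart A *ᵥ v = v ⬝ᵥ A *ᵥ v := by
  have hT : v ⬝ᵥ Aᵀ *ᵥ v = v ⬝ᵥ A *ᵥ v := by
    rw [mulVec_transpose, dotProduct_comm, dotProduct_mulVec]
  simp only [symPart, smul_mulVec, add_mulVec, dotProduct_smul, dotProduct_add, hT, smul_eq_mul]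
  ring

section EnergyNorm

variable {d : ℕ} {G : Matrix (Fin d) (Fin d) ℝ}

theorem normG_sq (hG : G.PosSemidef) (v : Fin d → ℝ) : normG G v ^ 2 = v ⬝ᵥ G *ᵥ v :=
  Real.sq_sqrt (by simpa using hG.dotProduct_mulVec_nonneg v)

theorem normG_neg (v : Fin d → ℝ) : normG G (-v) = normG G v := by
  simp [normG, mulVec_neg]

theorem normG_pos (hG : G.PosDef) {v : Fin d → ℝ} (hv : v ≠ 0) : 0 < normG G v :=
  Real.sqrt_pos.mpr (by simpa using hG.dotProduct_mulVec_pos hv)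

theorem dotProduct_mulVec_le_normG_mul_normG (hG : G.PosSemidef) (x y : Fin d → ℝ) :
    x ⬝ᵥ G *ᵥ y ≤ normG G x * normG G y := by
  rw [normG, normG, ← Real.sqrt_mul (by simpa using hG.dotProduct_mulVec_nonneg x)]
  exact (le_abs_self _).trans (Real.abs_le_sqrt (hG.dotProduct_mulVec_sq_le x y))

/-- The supremum defining `dualNorm` is finite: `r ⬝ᵥ v = (G⁻¹ r)ᵀ G v ≤ ‖G⁻¹ r‖_G ‖v‖_G`. -/
theorem bddAbove_range_dualNorm (hG : G.PosDef) (r : Fin d → ℝ) :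
    BddAbove (Set.range fun v : {v : Fin d → ℝ // v ≠ 0} => r ⬝ᵥ (v : Fin d → ℝ) / normG G v) := by
  have hr : G *ᵥ (G⁻¹ *ᵥ r) = r := by
    rw [mulVec_mulVec, mul_nonsing_inv _ (isUnit_iff_ne_zero.mpr hG.det_pos.ne'), one_mulVec]
  refine ⟨normG G (G⁻¹ *ᵥ r), ?_⟩
  rintro _ ⟨⟨v, hv⟩, rfl⟩
  rw [div_le_iff₀ (normG_pos hG hv)]
  calc r ⬝ᵥ v = (G⁻¹ *ᵥ r) ⬝ᵥ G *ᵥ v := by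
        rw [(isHermitian_iff_isSymm.mp hG.isHermitian).dotProduct_mulVec_comm, hr,
          dotProduct_comm]
    _ ≤ normG G (G⁻¹ *ᵥ r) * normG G v :=
        dotProduct_mulVec_le_normG_mul_normG hG.posSemidef _ _

theorem dotProduct_le_dualNorm_mul_normG (hG : G.PosDef) (r v : Fin d → ℝ) :
    r ⬝ᵥ v ≤ dualNorm G r * normG G v := by
  rcases eq_or_ne v 0 with rfl | hv
  · simp [normG]
  · rw [← div_le_iff₀ (normG_pos hG hv)]
    exact le_ciSup (bddAbove_range_dualNorm hG r) ⟨v, hv⟩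

end EnergyNorm

theorem energy_step {d : ℕ} {M A G : Matrix (Fin d) (Fin d) ℝ} {Δt αA : ℝ}
    {e e' r : Fin d → ℝ} (hM : M.PosSemidef) (hG : G.PosDef) (hΔt : 0 ≤ Δt) (hαA : 0 ≤ αA)
    (hcoA : αA * normG G e' ^ 2 ≤ e' ⬝ᵥ A *ᵥ e')
    (hstep : (M + Δt • A) *ᵥ e' = M *ᵥ e - Δt • r) :
    αA * (e' ⬝ᵥ M *ᵥ e' - e ⬝ᵥ M *ᵥ e + Δt * (e' ⬝ᵥ A *ᵥ e')) ≤ Δt * dualNorm G r ^ 2 := by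
  have htested : e' ⬝ᵥ M *ᵥ e' + Δt * (e' ⬝ᵥ A *ᵥ e') = e' ⬝ᵥ M *ᵥ e - Δt * (e' ⬝ᵥ r) := by
    simpa only [add_mulVec, smul_mulVec, dotProduct_add, dotProduct_sub, dotProduct_smul,
      smul_eq_mul] using congrArg (e' ⬝ᵥ ·) hstep
  have hcross := hM.two_mul_dotProduct_mulVec_le e' e
  set ρ := dualNorm G r
  set s := normG G e'
  have hresidual : -(e' ⬝ᵥ r) ≤ ρ * s := by
    simpa [dotProduct_comm r, normG_neg] using dotProduct_le_dualNorm_mul_normG hG r (-e')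
  have hyoung : 2 * αA * (ρ * s) ≤ ρ ^ 2 + αA * (αA * s ^ 2) := by
    nlinarith [sq_nonneg (ρ - αA * s)]
  nlinarith [mul_le_mul_of_nonneg_left hresidual (mul_nonneg hαA hΔt),
    mul_le_mul_of_nonneg_left hyoung hΔt, mul_le_mul_of_nonneg_left hcoA (mul_nonneg hΔt hαA)]

theorem sub_add_sum_Icc_le_sum_Icc {f g h : ℕ → ℝ} {N : ℕ}
    (hstep : ∀ k, 1 ≤ k → k ≤ N → f k - f (k - 1) + g k ≤ h k) {n : ℕ} (hn : n ≤ N) :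
    f n - f 0 + ∑ k ∈ Icc 1 n, g k ≤ ∑ k ∈ Icc 1 n, h k := by
  induction n with
  | zero => simp
  | succ n ih =>
    have hlast := hstep (n + 1) (by omega) hn
    rw [Nat.add_sub_cancel] at hlast
    rw [sum_Icc_succ_top (by omega), sum_Icc_succ_top (by omega)]
    linarith [ih (by omega)]

theorem sum_Icc_add_le_of_forall_add_sum_le {a b : ℕ → ℝ} {N : ℕ} {R : ℝ}
    (ha : ∀ n, 0 ≤ a n) (hb : ∀ n, 0 ≤ b n) (h : ∀ n ≤ N, a n + ∑ k ∈ Icc 1 n, b k ≤ R) :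
    ∑ k ∈ Icc 1 N, (a k + b k) ≤ (N + 1) * R := by
  have hsum_a : ∑ k ∈ Icc 1 N, a k ≤ N * R := by
    calc ∑ k ∈ Icc 1 N, a k ≤ ∑ _k ∈ Icc 1 N, R := by
          refine sum_le_sum fun k hk => ?_
          linarith [h k (mem_Icc.mp hk).2, sum_nonneg fun j (_ : j ∈ Icc 1 k) => hb j]
      _ = N * R := by simp
  rw [sum_add_distrib]
  linarith [h N le_rfl, ha N]

theorem energy_partial_sum_le {d : ℕ} {M A G : Matrix (Fin d) (Fin d) ℝ} {Δt αA : ℝ} {N : ℕ}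
    (hM : M.PosSemidef) (hG : G.PosDef) (hΔt : 0 ≤ Δt) (hαA : 0 ≤ αA)
    (hcoA : ∀ v : Fin d → ℝ, αA * normG G v ^ 2 ≤ v ⬝ᵥ A *ᵥ v)
    {e r : ℕ → Fin d → ℝ} (he0 : e 0 = 0)
    (hstep : ∀ k, 1 ≤ k → k ≤ N → (M + Δt • A) *ᵥ e k = M *ᵥ e (k - 1) - Δt • r k)
    {n : ℕ} (hn : n ≤ N) :
    αA * (e n ⬝ᵥ M *ᵥ e n) + ∑ k ∈ Icc 1 n, αA * Δt * (e k ⬝ᵥ A *ᵥ e k) ≤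
      Δt * ∑ k ∈ Icc 1 N, dualNorm G (r k) ^ 2 := by
  have htelescoped := sub_add_sum_Icc_le_sum_Icc (f := fun k => αA * (e k ⬝ᵥ M *ᵥ e k))
    (g := fun k => αA * Δt * (e k ⬝ᵥ A *ᵥ e k)) (h := fun k => Δt * dualNorm G (r k) ^ 2)
    (fun k hk hkN => by linarith [energy_step hM hG hΔt hαA (hcoA (e k)) (hstep k hk hkN)]) hn
  have hpartial : ∑ k ∈ Icc 1 n, Δt * dualNorm G (r k) ^ 2 ≤
      Δt * ∑ k ∈ Icc 1 N, dualNorm G (r k) ^ 2 := by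
    rw [← mul_sum]
    exact mul_le_mul_of_nonneg_left (sum_le_sum_of_subset_of_nonneg (Icc_subset_Icc_right hn)
      fun _ _ _ => sq_nonneg _) hΔt
  simp only [he0, mulVec_zero, dotProduct_zero, mul_zero, sub_zero] at htelescoped
  linarith

theorem stmt6_general {d : ℕ}
    (M A S G : Matrix (Fin d) (Fin d) ℝ) (hM : M.PosSemidef)
    (Δt : ℝ) (hΔt : 0 < Δt)
    (hGdef : G = M + Δt • S) (hG : G.PosDef)
    (N : ℕ)
    (αA αALB : ℝ) (hαALB : 0 < αALB) (hαALBle : αALB ≤ αA)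
    (hcoA : ∀ v : Fin d → ℝ, αA * (normG G v)^2 ≤ v ⬝ᵥ (symPart A).mulVec v)
    (αG αGLB : ℝ) (hαGLB : 0 < αGLB) (hαGLBle : αGLB ≤ αG)
    (hcoG : ∀ v : Fin d → ℝ,
      αG * (normG G v)^2 ≤ v ⬝ᵥ (M + Δt • symPart A).mulVec v)
    (e r : ℕ → Fin d → ℝ) (he0 : e 0 = 0)
    (hstep : ∀ k, 1 ≤ k → k ≤ N →
      (M + Δt • A).mulVec (e k) = M.mulVec (e (k - 1)) - Δt • r k) :
    (∑ m ∈ Finset.Icc 1 N,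
        (e m ⬝ᵥ M.mulVec (e m) + Δt * (e m ⬝ᵥ S.mulVec (e m))) =
      ∑ m ∈ Finset.Icc 1 N, (normG G (e m))^2) ∧
    ∑ m ∈ Finset.Icc 1 N, (normG G (e m))^2 ≤
      ((N * Δt + Δt) / (αGLB * αALB)) * ∑ m ∈ Finset.Icc 1 N, (dualNorm G (r m))^2 := by
  refine ⟨sum_congr rfl fun m _ => ?_, ?_⟩
  · rw [normG_sq hG.posSemidef, hGdef]
    simp only [add_mulVec, smul_mulVec, dotProduct_add, dotProduct_smul, smul_eq_mul]
  have hαA : 0 < αA := hαALB.trans_le hαALBle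
  have hαG : 0 < αG := hαGLB.trans_le hαGLBle
  simp only [dotProduct_symPart_mulVec] at hcoA
  simp only [add_mulVec, smul_mulVec, dotProduct_add, dotProduct_smul, smul_eq_mul,
    dotProduct_symPart_mulVec] at hcoG
  have hcoA_nonneg (v : Fin d → ℝ) : 0 ≤ v ⬝ᵥ A *ᵥ v :=
    (by positivity : 0 ≤ αA * normG G v ^ 2).trans (hcoA v)
  set R := ∑ m ∈ Icc 1 N, dualNorm G (r m) ^ 2
  have htotal : ∑ m ∈ Icc 1 N, (αA * (e m ⬝ᵥ M *ᵥ e m) + αA * Δt * (e m ⬝ᵥ A *ᵥ e m)) ≤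
      (N + 1) * (Δt * R) :=
    sum_Icc_add_le_of_forall_add_sum_le
      (fun n => mul_nonneg hαA.le (by simpa using hM.dotProduct_mulVec_nonneg (e n)))
      (fun n => by have := hcoA_nonneg (e n); positivity)
      fun n hn => energy_partial_sum_le hM hG hΔt.le hαA.le hcoA he0 hstep hn
  have hcoercive : αA * αG * ∑ m ∈ Icc 1 N, normG G (e m) ^ 2 ≤
      ∑ m ∈ Icc 1 N, (αA * (e m ⬝ᵥ M *ᵥ e m) + αA * Δt * (e m ⬝ᵥ A *ᵥ e m)) := by
    rw [mul_sum]
    refine sum_le_sum fun m _ => ?_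
    nlinarith [mul_le_mul_of_nonneg_left (hcoG (e m)) hαA.le]
  have hR : 0 ≤ R := sum_nonneg fun _ _ => sq_nonneg _
  calc ∑ m ∈ Icc 1 N, normG G (e m) ^ 2 ≤ ((N * Δt + Δt) / (αG * αA)) * R := by
        rw [div_mul_eq_mul_div, le_div_iff₀ (by positivity)]
        nlinarith
    _ ≤ ((N * Δt + Δt) / (αGLB * αALB)) * R := by
        gcongr

theorem stmt6 {d : ℕ} (hd : 1 ≤ d)
    (M A S G : Matrix (Fin d) (Fin d) ℝ) (hM : M.PosSemidef) (hS : S.IsSymm)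
    (Δt : ℝ) (hΔt : 0 < Δt)
    (hGdef : G = M + Δt • S) (hG : G.PosDef)
    (N : ℕ) (hN : 1 ≤ N)
    (αA αALB : ℝ) (hαALB : 0 < αALB) (hαALBle : αALB ≤ αA)
    (hcoA : ∀ v : Fin d → ℝ, αA * (normG G v)^2 ≤ v ⬝ᵥ (symPart A).mulVec v)
    (αG αGLB : ℝ) (hαGLB : 0 < αGLB) (hαGLBle : αGLB ≤ αG)
    (hcoG : ∀ v : Fin d → ℝ,
      αG * (normG G v)^2 ≤ v ⬝ᵥ (M + Δt • symPart A).mulVec v)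
    (e r : ℕ → Fin d → ℝ) (he0 : e 0 = 0)
    (hstep : ∀ k, 1 ≤ k → k ≤ N →
      (M + Δt • A).mulVec (e k) = M.mulVec (e (k - 1)) - Δt • r k) :
    (∑ m ∈ Finset.Icc 1 N,
        (e m ⬝ᵥ M.mulVec (e m) + Δt * (e m ⬝ᵥ S.mulVec (e m))) =
      ∑ m ∈ Finset.Icc 1 N, (normG G (e m))^2) ∧
    ∑ m ∈ Finset.Icc 1 N, (normG G (e m))^2 ≤
      ((N * Δt + Δt) / (αGLB * αALB)) * ∑ m ∈ Finset.Icc 1 N, (dualNorm G (r m))^2 :=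
  stmt6_general M A S G hM Δt hΔt hGdef hG N αA αALB hαALB hαALBle hcoA αG αGLB hαGLB hαGLBle hcoG e
    r he0 hstep
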